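/- arXiv:2012.10434 — 3 statements merged into one kernel-verified Lean document; each statement's English description precedes it below -/
import Mathlib

section
/- Let Λ be a numerical semigroup minimally generated by A, x ∈ Λ, and suppose x can be written as u₁a_i + u₂a_j + u₃a_k with a_i, a_j, a_k distinct minimal generators and u₁, u₂, u₃ ≥ 1. Then B(x) \ {0} has at least 7 elements; in particular the graph G_{Λ\B(x)}(Λ) does not have exactly 6 vertices. -/
/-- A numerical semigroup: a cofinite additive submonoid of ℕ. -/
def IsNumericalSemigroup (Λ : Set ℕ) : Prop :=
  0 ∈ Λ ∧ (∀ a ∈ Λ, ∀ b ∈ Λ, a + b ∈ Λ) ∧ (Λᶜ).Finite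

/-- An ideal of a numerical semigroup: a nonempty subset `I ⊆ Λ` with `I + Λ ⊆ I`. -/
def IsIdeal (Λ I : Set ℕ) : Prop :=
  I.Nonempty ∧ I ⊆ Λ ∧ ∀ i ∈ I, ∀ s ∈ Λ, i + s ∈ I

/-- An irreducible ideal: one that is not the intersection of two proper ideals
each properly containing it. -/
def IsIrreducibleIdeal (Λ I : Set ℕ) : Prop :=
  IsIdeal Λ I ∧
    ¬ ∃ J K : Set ℕ, IsIdeal Λ J ∧ IsIdeal Λ K ∧ J ≠ Λ ∧ K ≠ Λ ∧
      I ⊂ J ∧ I ⊂ K ∧ I = J ∩ K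

/-- The graph `G_I(Λ)`: vertices are the nonzero elements of `Λ \ I`,
and `x ~ y` iff `x + y ∈ I`. -/
def semigroupGraph (Λ I : Set ℕ) : SimpleGraph ↥((Λ \ I) \ {0}) where
  Adj x y := (x : ℕ) ≠ (y : ℕ) ∧ (x : ℕ) + (y : ℕ) ∈ I
  symm := by
    constructor
    intro x y h
    exact ⟨fun e => h.1 e.symm, by rw [add_comm]; exact h.2⟩
  loopless := by constructor; intro x h; exact h.1 rfl

/-- `B(x) = {y ∈ Λ : x - y ∈ Λ}` (i.e. `y + z = x` for some `z ∈ Λ`). -/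
def Bset (Λ : Set ℕ) (x : ℕ) : Set ℕ :=
  {y ∈ Λ | ∃ z ∈ Λ, y + z = x}

/-- The minimal generating set of a numerical semigroup: the nonzero elements
that are not sums of two nonzero elements. -/
def MinimalGenerators (Λ : Set ℕ) : Set ℕ :=
  {a ∈ Λ | a ≠ 0 ∧ ¬ ∃ b ∈ Λ, ∃ c ∈ Λ, b ≠ 0 ∧ c ≠ 0 ∧ a = b + c}

/-- `L_x^{(p)}`: representations of `x` as a positive-integer combination of
exactly `p` distinct minimal generators of `Λ`, encoded as finitely supported
functions from generators to positive coefficients. -/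
def Lrep (Λ : Set ℕ) (x : ℕ) (p : ℕ) : Set (ℕ →₀ ℕ) :=
  {u | (↑u.support : Set ℕ) ⊆ MinimalGenerators Λ ∧ u.support.card = p ∧
    u.sum (fun a c => c * a) = x}

/-- `G` contains a subdivision of `H`: branch vertices joined by internally
disjoint paths. -/
def SimpleGraph.ContainsSubdivision {V W : Type*} (G : SimpleGraph V)
    (H : SimpleGraph W) : Prop :=
  ∃ b : W ↪ V, ∃ P : ∀ i j : W, H.Adj i j → G.Walk (b i) (b j),
    (∀ i j (h : H.Adj i j), (P i j h).IsPath) ∧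
    (∀ i j (h : H.Adj i j) (k : W), b k ∈ (P i j h).support → k = i ∨ k = j) ∧
    (∀ i j (h : H.Adj i j) (i' j' : W) (h' : H.Adj i' j'),
      ({i, j} : Set W) ≠ {i', j'} →
      ∀ v, v ∈ (P i j h).support → v ∈ (P i' j' h').support →
        v = b i ∨ v = b j)

/-- Planarity via Kuratowski's criterion: no subgraph homeomorphic to
`K₅` or `K₃,₃`. -/
def SimpleGraph.Planar {V : Type*} (G : SimpleGraph V) : Prop :=
  ¬ G.ContainsSubdivision (⊤ : SimpleGraph (Fin 5)) ∧
  ¬ G.ContainsSubdivision (completeBipartiteGraph (Fin 3) (Fin 3))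

/-!
If `x = u₁a + u₂b + u₃c` with `uᵢ ≥ 1`, every `ε₁a + ε₂b + ε₃c` with `εᵢ ≤ uᵢ` lies in `B(x)`,
because the complementary combination is again in `Λ`. Taking `a, b, c, a + b, a + c, b + c`
and `x` itself gives seven nonzero elements of `B(x)`. They are pairwise distinct: a minimal
generator is never the sum of the other two, and `x ≥ a + b + c` exceeds every pair sum.
-/

def IsNumericalSemigroup.toAddSubmonoid {Λ : Set ℕ} (hΛ : IsNumericalSemigroup Λ) :
    AddSubmonoid ℕ where
  carrier := Λ
  add_mem' ha hb := hΛ.2.1 _ ha _ hb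
  zero_mem' := hΛ.1

lemma Bset_subset_Iic (Λ : Set ℕ) (x : ℕ) : Bset Λ x ⊆ Set.Iic x := by
  rintro y ⟨-, z, -, rfl⟩
  exact Nat.le_add_right y z

lemma finite_Bset (Λ : Set ℕ) (x : ℕ) : (Bset Λ x).Finite :=
  (Set.finite_Iic x).subset (Bset_subset_Iic Λ x)

lemma add_mem_Bset_add {S : AddSubmonoid ℕ} {x x' y y' : ℕ} (hy : y ∈ Bset S x)
    (hy' : y' ∈ Bset S x') : y + y' ∈ Bset S (x + x') := by
  obtain ⟨hyS, z, hzS, rfl⟩ := hy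
  obtain ⟨hyS', z', hzS', rfl⟩ := hy'
  exact ⟨add_mem hyS hyS', z + z', add_mem hzS hzS', by ring⟩

lemma mul_mem_Bset_mul {S : AddSubmonoid ℕ} {a m n : ℕ} (ha : a ∈ S) (hmn : m ≤ n) :
    m * a ∈ Bset S (n * a) := by
  obtain ⟨k, rfl⟩ := Nat.exists_eq_add_of_le hmn
  exact ⟨by simpa using nsmul_mem ha m, k * a, by simpa using nsmul_mem ha k, by ring⟩

lemma mul_add_mul_add_mul_mem_Bset {S : AddSubmonoid ℕ} {a b c m₁ m₂ m₃ n₁ n₂ n₃ : ℕ}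
    (ha : a ∈ S) (hb : b ∈ S) (hc : c ∈ S) (h₁ : m₁ ≤ n₁) (h₂ : m₂ ≤ n₂) (h₃ : m₃ ≤ n₃) :
    m₁ * a + m₂ * b + m₃ * c ∈ Bset S (n₁ * a + n₂ * b + n₃ * c) :=
  add_mem_Bset_add (add_mem_Bset_add (mul_mem_Bset_mul ha h₁) (mul_mem_Bset_mul hb h₂))
    (mul_mem_Bset_mul hc h₃)

lemma ne_add_of_mem_minimalGenerators {Λ : Set ℕ} {a b c : ℕ}
    (ha : a ∈ MinimalGenerators Λ) (hb : b ∈ Λ) (hc : c ∈ Λ) (hb0 : b ≠ 0) (hc0 : c ≠ 0) :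
    a ≠ b + c :=
  fun h => ha.2.2 ⟨b, hb, c, hc, hb0, hc0, h⟩

lemma nodup_zero_cons_generator_sums {Λ : Set ℕ} {a b c x : ℕ}
    (ha : a ∈ MinimalGenerators Λ) (hb : b ∈ MinimalGenerators Λ)
    (hc : c ∈ MinimalGenerators Λ) (hab : a ≠ b) (hac : a ≠ c) (hbc : b ≠ c)
    (hx : a + b + c ≤ x) : [0, a, b, c, a + b, a + c, b + c, x].Nodup := by
  have ha' := ne_add_of_mem_minimalGenerators ha hb.1 hc.1 hb.2.1 hc.2.1
  have hb' := ne_add_of_mem_minimalGenerators hb ha.1 hc.1 ha.2.1 hc.2.1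
  have hc' := ne_add_of_mem_minimalGenerators hc ha.1 hb.1 ha.2.1 hb.2.1
  have := ha.2.1
  have := hb.2.1
  have := hc.2.1
  simp only [List.nodup_cons, List.mem_cons, List.not_mem_nil, List.nodup_nil, or_false,
    not_false_eq_true, and_true]
  omega

theorem Bset_card_ge_seven_of_three_generators_general (Λ : Set ℕ)
    (hΛ : IsNumericalSemigroup Λ) (x ai aj ak u1 u2 u3 : ℕ)
    (hai : ai ∈ MinimalGenerators Λ) (haj : aj ∈ MinimalGenerators Λ)
    (hak : ak ∈ MinimalGenerators Λ)
    (hij : ai ≠ aj) (hik : ai ≠ ak) (hjk : aj ≠ ak)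
    (hu1 : 1 ≤ u1) (hu2 : 1 ≤ u2) (hu3 : 1 ≤ u3)
    (hrep : x = u1 * ai + u2 * aj + u3 * ak) :
    7 ≤ (Bset Λ x \ {0}).ncard ∧ (Bset Λ x \ {0}).ncard ≠ 6 := by
  have comb_mem : ∀ c₁ c₂ c₃, c₁ ≤ u1 → c₂ ≤ u2 → c₃ ≤ u3 →
      c₁ * ai + c₂ * aj + c₃ * ak ∈ Bset Λ x := fun _ _ _ h₁ h₂ h₃ =>
    hrep ▸ mul_add_mul_add_mul_mem_Bset (S := hΛ.toAddSubmonoid) hai.1 haj.1 hak.1 h₁ h₂ h₃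
  have hsum_le : ai + aj + ak ≤ x :=
    Bset_subset_Iic Λ x (by simpa using comb_mem 1 1 1 hu1 hu2 hu3)
  obtain ⟨hzero, hnodup⟩ :=
    List.nodup_cons.1 (nodup_zero_cons_generator_sums hai haj hak hij hik hjk hsum_le)
  set F := [ai, aj, ak, ai + aj, ai + ak, aj + ak, x].toFinset
  have hFB : (F : Set ℕ) ⊆ Bset Λ x := by
    intro y hy
    simp only [F, List.coe_toFinset, List.mem_cons, List.not_mem_nil, or_false] at hy
    rcases hy with rfl | rfl | rfl | rfl | rfl | rfl | rfl
    · simpa using comb_mem 1 0 0 hu1 (Nat.zero_le _) (Nat.zero_le _)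
    · simpa using comb_mem 0 1 0 (Nat.zero_le _) hu2 (Nat.zero_le _)
    · simpa using comb_mem 0 0 1 (Nat.zero_le _) (Nat.zero_le _) hu3
    · simpa using comb_mem 1 1 0 hu1 hu2 (Nat.zero_le _)
    · simpa using comb_mem 1 0 1 hu1 (Nat.zero_le _) hu3
    · simpa using comb_mem 0 1 1 (Nat.zero_le _) hu2 hu3
    · simpa [hrep] using comb_mem u1 u2 u3 le_rfl le_rfl le_rfl
  have hF : (F : Set ℕ) ⊆ Bset Λ x \ {0} := fun y hy =>
    ⟨hFB hy, fun h0 => hzero (Set.mem_singleton_iff.1 h0 ▸ List.mem_toFinset.1 hy)⟩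
  have h7 : 7 ≤ (Bset Λ x \ {0}).ncard :=
    calc 7 = (F : Set ℕ).ncard := by
          rw [Set.ncard_coe_finset, List.toFinset_card_of_nodup hnodup]; rfl
      _ ≤ _ := Set.ncard_le_ncard hF (finite_Bset Λ x).sdiff
  exact ⟨h7, by omega⟩

/-- If `x = u₁aᵢ + u₂aⱼ + u₃a_k` with `aᵢ, aⱼ, a_k` distinct
minimal generators and `u₁,u₂,u₃ ≥ 1`, then `B(x) \ {0}` has at least 7
elements; in particular the graph `G_{Λ\B(x)}(Λ)` does not have exactly 6
vertices. -/
theorem Bset_card_ge_seven_of_three_generators (Λ : Set ℕ)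
    (hΛ : IsNumericalSemigroup Λ) (x ai aj ak u1 u2 u3 : ℕ)
    (hx : x ∈ Λ)
    (hai : ai ∈ MinimalGenerators Λ) (haj : aj ∈ MinimalGenerators Λ)
    (hak : ak ∈ MinimalGenerators Λ)
    (hij : ai ≠ aj) (hik : ai ≠ ak) (hjk : aj ≠ ak)
    (hu1 : 1 ≤ u1) (hu2 : 1 ≤ u2) (hu3 : 1 ≤ u3)
    (hrep : x = u1 * ai + u2 * aj + u3 * ak) :
    7 ≤ (Bset Λ x \ {0}).ncard ∧ (Bset Λ x \ {0}).ncard ≠ 6 :=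
  Bset_card_ge_seven_of_three_generators_general Λ hΛ x ai aj ak u1 u2 u3 hai haj hak hij hik hjk
    hu1 hu2 hu3 hrep
end

section
/- Let Λ be a numerical semigroup and x ∈ Λ with x = 6a_i for a minimal generator a_i, and suppose this is the only representation of x in terms of minimal generators (L_x^{(p)} = ∅ for p ≥ 2 and |L_x^{(1)}| = 1). Then B(x) \ {0} = {a_i, 2a_i, 3a_i, 4a_i, 5a_i, 6a_i} and G_{Λ\B(x)}(Λ) has exactly 6 vertices. -/
/-!
Every element of `Λ` factors into minimal generators, and factorizations add. If `x = 6aᵢ` has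
the single factorization `6·aᵢ`, then for `y + z = x` the factorizations of `y` and `z` add up to
it, so `y = k·aᵢ` with `k ≤ 6`; conversely each `k·aᵢ` with `k ≤ 6` lies in `B(x)`.
-/

open Finsupp Set

def IsFactorization (Λ : Set ℕ) (u : ℕ →₀ ℕ) (y : ℕ) : Prop :=
  ↑u.support ⊆ MinimalGenerators Λ ∧ weight id u = y

namespace IsFactorization

variable {Λ : Set ℕ} {u v : ℕ →₀ ℕ} {y z : ℕ}

lemma add (hu : IsFactorization Λ u y) (hv : IsFactorization Λ v z) :
    IsFactorization Λ (u + v) (y + z) :=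
  ⟨fun a ha => (Finset.mem_union.mp (support_add ha)).elim (hu.1 ·) (hv.1 ·),
    by rw [map_add, hu.2, hv.2]⟩

lemma single {a : ℕ} (ha : a ∈ MinimalGenerators Λ) (n : ℕ) :
    IsFactorization Λ (Finsupp.single a n) (n * a) :=
  ⟨fun b hb => (Finset.mem_singleton.mp (support_single_subset hb)) ▸ ha,
    by simp [weight_single]⟩

lemma mem_Lrep (hu : IsFactorization Λ u y) : u ∈ Lrep Λ y (u.support.card) :=
  ⟨hu.1, rfl, by simpa [weight_apply] using hu.2⟩

lemma mem_Lrep_one (hy : y ≠ 0) (hLp : ∀ p, 2 ≤ p → Lrep Λ y p = ∅)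
    (hu : IsFactorization Λ u y) : u ∈ Lrep Λ y 1 := by
  obtain h | h | h : u.support.card = 0 ∨ u.support.card = 1 ∨ 2 ≤ u.support.card := by omega
  · rw [Finset.card_eq_zero, support_eq_empty] at h
    exact absurd (by simpa [h] using hu.2.symm) hy
  · exact h ▸ hu.mem_Lrep
  · exact absurd (hLp _ h ▸ hu.mem_Lrep) (notMem_empty u)

lemma unique (hy : y ≠ 0) (hL1 : (Lrep Λ y 1).ncard = 1) (hLp : ∀ p, 2 ≤ p → Lrep Λ y p = ∅)
    (hu : IsFactorization Λ u y) (hv : IsFactorization Λ v y) : u = v := by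
  obtain ⟨w, hw⟩ := ncard_eq_one.mp hL1
  have hu' := hw ▸ hu.mem_Lrep_one hy hLp
  have hv' := hw ▸ hv.mem_Lrep_one hy hLp
  exact (mem_singleton_iff.mp hu').trans (mem_singleton_iff.mp hv').symm

end IsFactorization

lemma exists_isFactorization {Λ : Set ℕ} {y : ℕ} (hy : y ∈ Λ) :
    ∃ u, IsFactorization Λ u y := by
  induction y using Nat.strong_induction_on with
  | _ y ih =>
    rcases eq_or_ne y 0 with rfl | hy0
    · exact ⟨0, by simp [IsFactorization]⟩
    by_cases hmin : y ∈ MinimalGenerators Λ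
    · exact ⟨_, by simpa using IsFactorization.single hmin 1⟩
    obtain ⟨b, hb, c, hc, hb0, hc0, rfl⟩ : ∃ b ∈ Λ, ∃ c ∈ Λ, b ≠ 0 ∧ c ≠ 0 ∧ y = b + c := by
      by_contra h
      exact hmin ⟨hy, hy0, h⟩
    obtain ⟨ub, hub⟩ := ih b (by omega) hb
    obtain ⟨uc, huc⟩ := ih c (by omega) hc
    exact ⟨_, hub.add huc⟩

/-- Factorizations of `y` and `x - y` add up to a factorization of `x`, which can only be `u₀`. -/
lemma exists_le_weight_eq_of_mem_Bset {Λ : Set ℕ} {x y : ℕ} {u₀ : ℕ →₀ ℕ}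
    (huniq : ∀ u, IsFactorization Λ u x → u = u₀) (hy : y ∈ Bset Λ x) :
    ∃ v ≤ u₀, weight id v = y := by
  obtain ⟨hyΛ, z, hzΛ, rfl⟩ := hy
  obtain ⟨uy, huy⟩ := exists_isFactorization hyΛ
  obtain ⟨uz, huz⟩ := exists_isFactorization hzΛ
  exact ⟨uy, huniq _ (huy.add huz) ▸ le_self_add, huy.2⟩

lemma nat_mul_mem {Λ : Set ℕ} (h0 : 0 ∈ Λ) (hadd : ∀ a ∈ Λ, ∀ b ∈ Λ, a + b ∈ Λ) {a : ℕ}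
    (ha : a ∈ Λ) (k : ℕ) : k * a ∈ Λ := by
  induction k with
  | zero => simpa using h0
  | succ k ih => simpa [Nat.succ_mul] using hadd _ ih _ ha

lemma mul_mem_Bset_mul_s11 {Λ : Set ℕ} (h0 : 0 ∈ Λ) (hadd : ∀ a ∈ Λ, ∀ b ∈ Λ, a + b ∈ Λ)
    {a k n : ℕ} (ha : a ∈ Λ) (hkn : k ≤ n) : k * a ∈ Bset Λ (n * a) :=
  ⟨nat_mul_mem h0 hadd ha k, (n - k) * a, nat_mul_mem h0 hadd ha _, by
    rw [← add_mul, Nat.add_sub_cancel' hkn]⟩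

lemma Bset_mul_diff_zero_of_unique {Λ : Set ℕ} (h0 : 0 ∈ Λ)
    (hadd : ∀ a ∈ Λ, ∀ b ∈ Λ, a + b ∈ Λ) {a n : ℕ} (ha : a ∈ MinimalGenerators Λ)
    (huniq : ∀ u, IsFactorization Λ u (n * a) → u = Finsupp.single a n) :
    Bset Λ (n * a) \ {0} = (· * a) '' Icc 1 n := by
  ext y
  constructor
  · rintro ⟨hy, hy0⟩
    obtain ⟨v, hv, rfl⟩ := exists_le_weight_eq_of_mem_Bset huniq hy
    obtain ⟨k, rfl⟩ := support_subset_singleton'.mp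
      ((support_mono hv).trans support_single_subset)
    have hkn : k ≤ n := by simpa using hv a
    refine ⟨k, ⟨Nat.one_le_iff_ne_zero.mpr ?_, hkn⟩, by simp [weight_single]⟩
    rintro rfl
    simp at hy0
  · rintro ⟨k, ⟨hk1, hkn⟩, rfl⟩
    exact ⟨mul_mem_Bset_mul_s11 h0 hadd ha.1 hkn, Nat.mul_ne_zero (by omega) ha.2.1⟩

lemma ncard_image_mul_Icc_one {a : ℕ} (ha : a ≠ 0) (n : ℕ) :
    ((· * a) '' Icc 1 n).ncard = n := by
  rw [ncard_image_of_injective _ (mul_left_injective₀ ha), Set.ncard_Icc_nat]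
  omega

lemma image_mul_Icc_one_six (a : ℕ) :
    (· * a) '' Icc 1 6 = {a, 2 * a, 3 * a, 4 * a, 5 * a, 6 * a} := by
  ext y
  simp only [mem_image, mem_Icc, mem_insert_iff, mem_singleton_iff]
  constructor
  · rintro ⟨k, ⟨hk1, hk6⟩, rfl⟩
    interval_cases k <;> simp
  · rintro (rfl | rfl | rfl | rfl | rfl | rfl)
    exacts [⟨1, by simp⟩, ⟨2, by simp⟩, ⟨3, by simp⟩, ⟨4, by simp⟩, ⟨5, by simp⟩, ⟨6, by simp⟩]

/-- If `x = 6aᵢ` is the only representation of `x`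
(`|L¹|=1`, `Lᵖ=∅` for `p ≥ 2`), then
`B(x) \ {0} = {aᵢ, 2aᵢ, 3aᵢ, 4aᵢ, 5aᵢ, 6aᵢ}` and the graph has exactly 6
vertices. -/
theorem Bset_of_six_ai (Λ : Set ℕ)
    (hΛ : IsNumericalSemigroup Λ) (x ai : ℕ)
    (hai : ai ∈ MinimalGenerators Λ) (hx : x = 6 * ai)
    (hL1 : (Lrep Λ x 1).ncard = 1) (hLp : ∀ p, 2 ≤ p → Lrep Λ x p = ∅) :
    Bset Λ x \ {0} = {ai, 2 * ai, 3 * ai, 4 * ai, 5 * ai, 6 * ai} ∧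
    (Bset Λ x \ {0}).ncard = 6 := by
  subst hx
  have hB : Bset Λ (6 * ai) \ {0} = (· * ai) '' Icc 1 6 :=
    Bset_mul_diff_zero_of_unique hΛ.1 hΛ.2.1 hai fun u hu =>
      hu.unique (Nat.mul_ne_zero (by norm_num) hai.2.1) hL1 hLp (.single hai 6)
  rw [hB, ncard_image_mul_Icc_one hai.2.1]
  exact ⟨image_mul_Icc_one_six ai, rfl⟩
end

section
/- Let Λ be a numerical semigroup and x ∈ Λ with x = 7a_i for a minimal generator a_i, where this is the only representation of x (L_x^{(p)} = ∅ for p ≥ 2, |L_x^{(1)}| = 1). Then B(x) \ {0} = {a_i, 2a_i, 3a_i, 4a_i, 5a_i, 6a_i, 7a_i}, G_{Λ\B(x)}(Λ) has 7 vertices, and its degree sequence is (1, 2, 3, 3, 4, 5, 6). -/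
/-! If `n • a` is the only way of writing `n • a` with minimal generators, then for
`y ∈ B(n • a)` the representations of `y` and of `n • a - y` add up to a representation of
`n • a`, which must be `n • a` itself; so `B(n • a) \ {0} = {a, 2a, …, na}`. The vertex `ka`
is then adjacent to `ja` exactly when `j ≠ k` and `j + k > n`, i.e. `j ∈ (n - k, n] \ {k}`,
a set with `k` elements if `2k ≤ n` and `k - 1` otherwise. -/

def IsGeneratorRepr (Λ : Set ℕ) (u : ℕ →₀ ℕ) (y : ℕ) : Prop :=
  (↑u.support : Set ℕ) ⊆ MinimalGenerators Λ ∧ u.sum (fun a c => c * a) = y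

namespace IsGeneratorRepr

variable {Λ : Set ℕ} {u v : ℕ →₀ ℕ} {y z : ℕ}

lemma add (hu : IsGeneratorRepr Λ u y) (hv : IsGeneratorRepr Λ v z) :
    IsGeneratorRepr Λ (u + v) (y + z) := by
  refine ⟨fun a ha => ?_, ?_⟩
  · rcases Finset.mem_union.mp (Finsupp.support_add ha) with h | h
    exacts [hu.1 h, hv.1 h]
  · rw [Finsupp.sum_add_index' (fun a => zero_mul a) (fun a b₁ b₂ => add_mul b₁ b₂ a), hu.2, hv.2]

lemma single {a c : ℕ} (ha : a ∈ MinimalGenerators Λ) (hc : c ≠ 0) :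
    IsGeneratorRepr Λ (Finsupp.single a c) (c * a) := by
  refine ⟨?_, by simp⟩
  rw [Finsupp.support_single a hc, Finset.coe_singleton]
  exact Set.singleton_subset_iff.mpr ha

lemma mem_Lrep (hu : IsGeneratorRepr Λ u y) : u ∈ Lrep Λ y u.support.card :=
  ⟨hu.1, rfl, hu.2⟩

end IsGeneratorRepr

lemma exists_isGeneratorRepr {Λ : Set ℕ} {y : ℕ} (hy : y ∈ Λ) :
    ∃ u, IsGeneratorRepr Λ u y := by
  induction y using Nat.strong_induction_on with
  | _ y ih =>
    by_cases hy0 : y = 0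
    · exact ⟨0, by simp [IsGeneratorRepr, hy0]⟩
    by_cases hsplit : ∃ b ∈ Λ, ∃ c ∈ Λ, b ≠ 0 ∧ c ≠ 0 ∧ y = b + c
    · obtain ⟨b, hb, c, hc, hb0, hc0, rfl⟩ := hsplit
      obtain ⟨u, hu⟩ := ih b (by omega) hb
      obtain ⟨v, hv⟩ := ih c (by omega) hc
      exact ⟨u + v, hu.add hv⟩
    · exact ⟨_, by simpa using IsGeneratorRepr.single ⟨hy, hy0, hsplit⟩ one_ne_zero⟩

lemma IsNumericalSemigroup.mul_mem {Λ : Set ℕ} {a : ℕ} (hΛ : IsNumericalSemigroup Λ) (ha : a ∈ Λ)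
    (k : ℕ) : k * a ∈ Λ := by
  induction k with
  | zero => simpa using hΛ.1
  | succ k ih => simpa [Nat.succ_mul] using hΛ.2.1 _ ih _ ha

section UniqueRepr

variable {Λ : Set ℕ} {a n : ℕ}

lemma Bset_subset (x : ℕ) : Bset Λ x ⊆ Λ := fun _ hy => hy.1

lemma le_of_mem_Bset {x y : ℕ} (hy : y ∈ Bset Λ x) : y ≤ x := by
  obtain ⟨-, z, -, rfl⟩ := hy
  omega

lemma mul_mem_Bset_mul_iff (hΛ : IsNumericalSemigroup Λ) (ha : a ∈ Λ) (ha0 : a ≠ 0) (m : ℕ) :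
    m * a ∈ Bset Λ (n * a) ↔ m ≤ n := by
  refine ⟨fun h => le_of_mul_le_mul_right (le_of_mem_Bset h) (Nat.pos_of_ne_zero ha0),
    fun h => ⟨hΛ.mul_mem ha m, (n - m) * a, hΛ.mul_mem ha _, ?_⟩⟩
  rw [← add_mul, Nat.add_sub_cancel' h]

lemma eq_single_of_unique_repr (ha : a ∈ MinimalGenerators Λ) (hn : n ≠ 0)
    (hL1 : (Lrep Λ (n * a) 1).ncard = 1) (hLp : ∀ p, 2 ≤ p → Lrep Λ (n * a) p = ∅)
    {u : ℕ →₀ ℕ} (hu : IsGeneratorRepr Λ u (n * a)) : u = Finsupp.single a n := by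
  obtain ⟨w, hw⟩ := Set.ncard_eq_one.mp hL1
  have hsingle : Finsupp.single a n ∈ Lrep Λ (n * a) 1 := by
    simpa [Finsupp.support_single a hn] using (IsGeneratorRepr.single ha hn).mem_Lrep
  have hcard : u.support.card = 1 := by
    have hu0 : u ≠ 0 := by
      rintro rfl
      exact Nat.mul_ne_zero hn ha.2.1 (by simpa using hu.2.symm)
    have hpos := Finset.card_pos.mpr (Finsupp.support_nonempty_iff.mpr hu0)
    by_contra h
    have hempty := hLp u.support.card (by omega)
    simpa [hempty] using hu.mem_Lrep
  have hmem := hu.mem_Lrep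
  rw [hcard, hw] at hmem
  rw [hw] at hsingle
  exact hmem.trans hsingle.symm

variable (hΛ : IsNumericalSemigroup Λ) (ha : a ∈ MinimalGenerators Λ) (hn : n ≠ 0)
  (hL1 : (Lrep Λ (n * a) 1).ncard = 1) (hLp : ∀ p, 2 ≤ p → Lrep Λ (n * a) p = ∅)
include ha hn hL1 hLp

lemma exists_eq_mul_of_mem_Bset {y : ℕ} (hy : y ∈ Bset Λ (n * a)) : ∃ c ≤ n, y = c * a := by
  obtain ⟨hyΛ, z, hz, hyz⟩ := hy
  obtain ⟨u, hu⟩ := exists_isGeneratorRepr hyΛ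
  obtain ⟨v, hv⟩ := exists_isGeneratorRepr hz
  have huv : u + v = Finsupp.single a n :=
    eq_single_of_unique_repr ha hn hL1 hLp (hyz ▸ hu.add hv)
  have hle : u ≤ Finsupp.single a n := huv ▸ le_self_add
  obtain ⟨c, rfl⟩ : ∃ c, u = Finsupp.single a c := by
    rw [← Finsupp.support_subset_singleton']
    exact (Finsupp.support_mono hle).trans Finsupp.support_single_subset
  refine ⟨c, by simpa using hle a, ?_⟩
  simpa using hu.2.symm

include hΛ in
lemma Bset_diff_zero_eq_image : Bset Λ (n * a) \ {0} = (· * a) '' Set.Icc 1 n := by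
  ext y
  constructor
  · rintro ⟨hy, hy0⟩
    obtain ⟨c, hcn, rfl⟩ := exists_eq_mul_of_mem_Bset ha hn hL1 hLp hy
    exact ⟨c, ⟨Nat.pos_of_ne_zero (by rintro rfl; simp at hy0), hcn⟩, rfl⟩
  · rintro ⟨c, ⟨hc1, hcn⟩, rfl⟩
    exact ⟨(mul_mem_Bset_mul_iff hΛ ha.1 ha.2.1 c).mpr hcn, Nat.mul_ne_zero (by omega) ha.2.1⟩

include hΛ in
lemma ncard_Bset_diff_zero : (Bset Λ (n * a) \ {0}).ncard = n := by
  rw [Bset_diff_zero_eq_image hΛ ha hn hL1 hLp,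
    Set.ncard_image_of_injective _ (mul_left_injective₀ ha.2.1)]
  simp

include hΛ in
lemma neighbors_eq_image {k : ℕ} (hk : k ≤ n) :
    {z ∈ Bset Λ (n * a) \ {0} | z ≠ k * a ∧ k * a + z ∈ Λ \ Bset Λ (n * a)} =
      (· * a) '' ((Finset.Ioc (n - k) n).erase k : Set ℕ) := by
  have hinj := mul_left_injective₀ ha.2.1
  have hnotB (j : ℕ) : k * a + j * a ∉ Bset Λ (n * a) ↔ n < k + j := by
    rw [← add_mul, mul_mem_Bset_mul_iff hΛ ha.1 ha.2.1, not_le]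
  rw [Bset_diff_zero_eq_image hΛ ha hn hL1 hLp]
  ext z
  constructor
  · rintro ⟨⟨j, ⟨hj1, hjn⟩, rfl⟩, hne, -, hjB⟩
    have hjk : j ≠ k := fun h => hne (h ▸ rfl)
    have hsum := (hnotB j).mp hjB
    exact ⟨j, by simp only [Finset.coe_erase, Finset.coe_Ioc]; grind, rfl⟩
  · rintro ⟨j, hj, rfl⟩
    simp only [Finset.coe_erase, Finset.coe_Ioc, Set.mem_sdiff, Set.mem_Ioc,
      Set.mem_singleton_iff] at hj
    refine ⟨⟨j, ⟨by omega, hj.1.2⟩, rfl⟩, fun h => hj.2 (hinj h), ?_, (hnotB j).mpr (by omega)⟩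
    rw [← add_mul]
    exact hΛ.mul_mem ha.1 _

include hΛ in
lemma ncard_neighbors {k : ℕ} (hk : k ≤ n) :
    {z ∈ Bset Λ (n * a) \ {0} | z ≠ k * a ∧ k * a + z ∈ Λ \ Bset Λ (n * a)}.ncard =
      if 2 * k ≤ n then k else k - 1 := by
  rw [neighbors_eq_image hΛ ha hn hL1 hLp hk,
    Set.ncard_image_of_injective _ (mul_left_injective₀ ha.2.1), Set.ncard_coe_finset,
    Finset.card_erase_eq_ite, Nat.card_Ioc]
  simp only [Finset.mem_Ioc]
  split_ifs <;> omega

end UniqueRepr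

/-- If `x = 7aᵢ` is the only representation of `x`, then
`B(x) \ {0} = {aᵢ, 2aᵢ, …, 7aᵢ}`, the graph `G_{Λ\B(x)}(Λ)` has 7 vertices,
and the degree of the vertex `k·aᵢ` is `k` for `k ≤ 3` and `k - 1` for
`4 ≤ k ≤ 7`, i.e. the degree sequence is `(1, 2, 3, 3, 4, 5, 6)`. -/
theorem Bset_of_seven_ai (Λ : Set ℕ)
    (hΛ : IsNumericalSemigroup Λ) (x ai : ℕ)
    (hai : ai ∈ MinimalGenerators Λ) (hx : x = 7 * ai)
    (hL1 : (Lrep Λ x 1).ncard = 1) (hLp : ∀ p, 2 ≤ p → Lrep Λ x p = ∅) :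
    Bset Λ x \ {0} =
      {ai, 2 * ai, 3 * ai, 4 * ai, 5 * ai, 6 * ai, 7 * ai} ∧
    ((Λ \ (Λ \ Bset Λ x)) \ {0}).ncard = 7 ∧
    (∀ k, 1 ≤ k → k ≤ 7 →
      ({z ∈ Bset Λ x \ {0} | z ≠ k * ai ∧ k * ai + z ∈ Λ \ Bset Λ x}).ncard =
        if k ≤ 3 then k else k - 1) := by
  subst hx
  have h7 : (7 : ℕ) ≠ 0 := by norm_num
  refine ⟨?_, ?_, fun k _ hk7 => ?_⟩
  · rw [Bset_diff_zero_eq_image hΛ hai h7 hL1 hLp,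
      show Set.Icc 1 7 = {1, 2, 3, 4, 5, 6, 7} by ext; simp; omega]
    simp [Set.image_insert_eq]
  · rw [Set.sdiff_sdiff_cancel_left (Bset_subset _), ncard_Bset_diff_zero hΛ hai h7 hL1 hLp]
  · rw [ncard_neighbors hΛ hai h7 hL1 hLp hk7]
    split_ifs <;> omega
end
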